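/- arXiv:1011.0910 — 2 statements merged into one kernel-verified Lean document; each statement's English description precedes it below -/
import Mathlib

section
/- Assume B(x,·) is a bijection of ℝ onto ℝ for every x, and for α ∈ ℝ with c_α defined on all of ℝ (B(x, c_α(x)) = α), set the adapted Kruzkov entropy η^{(α)}(x,u) = |u − c_α(x)| and flux q^{(α)}(x,u) = (B(x,u) − α)(sgn(u − c_α(x)))*. Assume for every x ∈ J_K and every (u⁻,u⁺) with B(x⁻,u⁻) = B(x⁺,u⁺) that (sgn(u⁻ − c_α(x⁻)))* = (sgn(u⁺ − c_α(x⁺)))*. Then (η^{(α)}, q^{(α)}) is an entropy–flux pair: η^{(α)}_u(x,u) B_u(x,u) = q^{(α)}_u(x,u) for u ≠ c_α(x), and q^{(α)}(x⁺,u⁺) − q^{(α)}(x⁻,u⁻) = 0 for every x and every Rankine–Hugoniot pair (u⁻,u⁺). -/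
open Set Filter

/-- The adapted Kruzkov entropies `η^α(x,u) = |u − c_α(x)|` with fluxes
`q^α(x,u) = (B(x,u) − α) sgn(u − c_α(x))` form entropy–flux pairs:
the compatibility `η^α_u B_u = q^α_u` holds for `u ≠ c_α(x)`, and the jump of
`q^α` across any Rankine–Hugoniot discontinuity vanishes, under the
Audusse–Perthame condition on the sign of `u± − c_α(x±)`. -/
theorem stmt18 (B Bp Bm Bu : ℝ → ℝ → ℝ) (JK : Set ℝ)
    (hbij : ∀ x : ℝ, Function.Bijective (B x))
    (hBu : ∀ x u : ℝ, HasDerivAt (B x) (Bu x u) u)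
    -- one-sided limits in x of B(·,u), equal to B outside JK
    (hBp : ∀ u x : ℝ, Filter.Tendsto (fun y => B y u)
      (nhdsWithin x (Set.Ioi x)) (nhds (Bp x u)))
    (hBm : ∀ u x : ℝ, Filter.Tendsto (fun y => B y u)
      (nhdsWithin x (Set.Iio x)) (nhds (Bm x u)))
    (hnojump : ∀ x ∉ JK, ∀ u : ℝ, Bp x u = B x u ∧ Bm x u = B x u)
    (α : ℝ) (cα cαp cαm : ℝ → ℝ)
    (hc : ∀ x, B x (cα x) = α)
    (hcp : ∀ x, Bp x (cαp x) = α) (hcm : ∀ x, Bm x (cαm x) = α)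
    (hcnojump : ∀ x ∉ JK, cαp x = cα x ∧ cαm x = cα x)
    -- Audusse–Perthame sign condition at the discontinuities
    (hentr : ∀ x ∈ JK, ∀ um up : ℝ, Bm x um = Bp x up →
      Real.sign (um - cαm x) = Real.sign (up - cαp x)) :
    -- compatibility η^α_u B_u = q^α_u off the diagonal u = c_α(x)
    (∀ x u : ℝ, u ≠ cα x →
      HasDerivAt (fun v => |v - cα x|) (Real.sign (u - cα x)) u ∧
      HasDerivAt (fun v => (B x v - α) * Real.sign (v - cα x))
        (Real.sign (u - cα x) * Bu x u) u) ∧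
    -- vanishing of the jump of q^α across Rankine–Hugoniot pairs
    (∀ x um up : ℝ, Bm x um = Bp x up →
      (Bp x up - α) * Real.sign (up - cαp x) -
        (Bm x um - α) * Real.sign (um - cαm x) = 0) := by
  constructor
  · intro x u hu
    rcases lt_or_gt_of_ne hu with h | h
    · have hs : Real.sign (u - cα x) = -1 := Real.sign_of_neg (by linarith)
      have hev : ∀ᶠ v in nhds u, v < cα x :=
        Filter.eventually_iff_exists_mem.2 ⟨Set.Iio (cα x), Iio_mem_nhds h, fun v hv => hv⟩
      constructor
      · rw [hs]
        have hd : HasDerivAt (fun v : ℝ => cα x - v) (-1) u := by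
          simpa using (hasDerivAt_id u).const_sub (cα x)
        refine hd.congr_of_eventuallyEq ?_
        filter_upwards [hev] with v hv
        rw [abs_of_neg (by linarith)]; ring
      · rw [hs]
        have hd : HasDerivAt (fun v => (B x v - α) * (-1 : ℝ)) (Bu x u * (-1)) u :=
          ((hBu x u).sub_const α).mul_const (-1)
        have hd2 : HasDerivAt (fun v => (B x v - α) * (-1 : ℝ)) (-1 * Bu x u) u := by
          rwa [mul_comm] at hd
        refine hd2.congr_of_eventuallyEq ?_
        filter_upwards [hev] with v hv
        rw [Real.sign_of_neg (by linarith)]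
    · have hs : Real.sign (u - cα x) = 1 := Real.sign_of_pos (by linarith)
      have hev : ∀ᶠ v in nhds u, cα x < v :=
        Filter.eventually_iff_exists_mem.2 ⟨Set.Ioi (cα x), Ioi_mem_nhds h, fun v hv => hv⟩
      constructor
      · rw [hs]
        have hd : HasDerivAt (fun v : ℝ => v - cα x) 1 u := by
          simpa using (hasDerivAt_id u).sub_const (cα x)
        refine hd.congr_of_eventuallyEq ?_
        filter_upwards [hev] with v hv
        rw [abs_of_pos (by linarith)]
      · rw [hs]
        have hd : HasDerivAt (fun v => (B x v - α) * (1 : ℝ)) (Bu x u * 1) u :=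
          ((hBu x u).sub_const α).mul_const 1
        have hd2 : HasDerivAt (fun v => (B x v - α) * (1 : ℝ)) (1 * Bu x u) u := by
          rwa [mul_comm] at hd
        refine hd2.congr_of_eventuallyEq ?_
        filter_upwards [hev] with v hv
        rw [Real.sign_of_pos (by linarith)]
  · intro x um up hRH
    by_cases hx : x ∈ JK
    · rw [hentr x hx um up hRH, hRH]; ring
    · obtain ⟨hp, hm⟩ := hcnojump x hx
      have hBp' := (hnojump x hx up).1
      have hBm' := (hnojump x hx um).2
      have : B x um = B x up := by rw [← hBm', ← hBp', hRH]
      have heq : um = up := (hbij x).injective this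
      subst heq
      rw [hp, hm, hBp', hBm']
      ring
end

section
/- Let η : ℝ → ℝ be a continuous convex function and let c_m < c_{m+1} < ⋯ < c_n be real numbers. Define δ_i = (η(c_{i+1}) − η(c_i))/(c_{i+1} − c_i) for i = m,…,n−1, b = (δ_m + δ_{n−1})/2, b_i = (δ_i − δ_{i−1})/2 for i = m+1,…,n−1, and a = η(c_m) − b c_m − Σ_{i=m+1}^{n−1} b_i (c_i − c_m). Then b_i ≥ 0 for all i, and the function η̂(u) = a + b u + Σ_{i=m+1}^{n−1} b_i |u − c_i| is a convex piecewise affine function coinciding with η at each point u = c_i, i = m,…,n. -/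
open Set Finset

/-- Piecewise affine interpolation of a convex function in the canonical basis
of absolute value functions: with `δᵢ` the difference quotients,
`b = (δ₀ + δ_{n-1})/2`, `bᵢ = (δᵢ − δ_{i−1})/2` and a suitable constant `a`,
all coefficients `bᵢ` are nonnegative and
`η̂(u) = a + b u + Σ_{i=1}^{n-1} bᵢ |u − cᵢ|` is a convex piecewise affine
function coinciding with `η` at the nodes `c₀, …, c_n`. -/
theorem stmt19 (η : ℝ → ℝ) (hηc : Continuous η)
    (hη : ConvexOn ℝ Set.univ η)
    (n : ℕ) (hn : 1 ≤ n) (c : ℕ → ℝ) (hc : ∀ i < n, c i < c (i + 1))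
    (δ : ℕ → ℝ) (hδ : ∀ i, δ i = (η (c (i + 1)) - η (c i)) / (c (i + 1) - c i))
    (bc : ℝ) (hbc : bc = (δ 0 + δ (n - 1)) / 2)
    (bi : ℕ → ℝ) (hbi : ∀ i, bi i = (δ i - δ (i - 1)) / 2)
    (ac : ℝ) (hac : ac = η (c 0) - bc * c 0 -
      ∑ i ∈ Finset.Ico 1 n, bi i * (c i - c 0))
    (ηhat : ℝ → ℝ)
    (hηhat : ∀ u, ηhat u = ac + bc * u + ∑ i ∈ Finset.Ico 1 n, bi i * |u - c i|) :
    (∀ i ∈ Finset.Ico 1 n, 0 ≤ bi i) ∧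
    ConvexOn ℝ Set.univ ηhat ∧
    (∀ i ≤ n, ηhat (c i) = η (c i)) := by
  -- strict monotonicity of the nodes
  have hmono : ∀ i j, i < j → j ≤ n → c i < c j := by
    intro i j
    induction j with
    | zero => intro h _; omega
    | succ k ih =>
      intro hij hjn
      rcases Nat.lt_succ_iff_lt_or_eq.mp hij with h | h
      · exact (ih h (by omega)).trans (hc k (by omega))
      · exact h ▸ hc i (by omega)
  have hle : ∀ i j, i ≤ j → j ≤ n → c i ≤ c j := by
    intro i j hij hjn
    rcases Nat.lt_or_ge i j with h | h
    · exact (hmono i j h hjn).le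
    · have : i = j := by omega
      simp [this]
  -- adjacent slopes are monotone
  have hδadj : ∀ k, k + 2 ≤ n → δ k ≤ δ (k + 1) := by
    intro k hk
    rw [hδ, hδ]
    exact hη.slope_mono_adjacent (Set.mem_univ _) (Set.mem_univ _)
      (hc k (by omega)) (hc (k + 1) (by omega))
  -- nonnegativity of the coefficients
  have hbi0 : ∀ i ∈ Finset.Ico 1 n, 0 ≤ bi i := by
    intro i hi
    simp only [Finset.mem_Ico] at hi
    rw [hbi]
    have h := hδadj (i - 1) (by omega)
    have hi1 : i - 1 + 1 = i := by omega
    rw [hi1] at h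
    linarith
  -- telescoping sums
  have hT : ∀ j, ∑ i ∈ Finset.Ico 1 (j + 1), bi i = (δ j - δ 0) / 2 := by
    intro j
    induction j with
    | zero => simp
    | succ k ih =>
      rw [Finset.sum_Ico_succ_top (by omega), ih, hbi]
      have : k + 1 - 1 = k := by omega
      rw [this]
      ring
  -- convexity
  have hconv : ConvexOn ℝ Set.univ ηhat := by
    refine ⟨convex_univ, ?_⟩
    intro x _ y _ a b ha hb hab
    simp only [smul_eq_mul]
    rw [hηhat, hηhat, hηhat]
    have h1 : ∀ i ∈ Finset.Ico 1 n,
        bi i * |a * x + b * y - c i| ≤ a * (bi i * |x - c i|) + b * (bi i * |y - c i|) := by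
      intro i hi
      have hb0 := hbi0 i hi
      have habs : |a * x + b * y - c i| ≤ a * |x - c i| + b * |y - c i| := by
        have heq : a * x + b * y - c i = a * (x - c i) + b * (y - c i) := by
          linear_combination (c i) * hab
        rw [heq]
        calc |a * (x - c i) + b * (y - c i)| ≤ |a * (x - c i)| + |b * (y - c i)| :=
              abs_add_le _ _
          _ = a * |x - c i| + b * |y - c i| := by
              rw [abs_mul, abs_mul, abs_of_nonneg ha, abs_of_nonneg hb]
      calc bi i * |a * x + b * y - c i| ≤ bi i * (a * |x - c i| + b * |y - c i|) :=
            mul_le_mul_of_nonneg_left habs hb0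
        _ = a * (bi i * |x - c i|) + b * (bi i * |y - c i|) := by ring
    have h2 := Finset.sum_le_sum h1
    rw [Finset.sum_add_distrib, ← Finset.mul_sum, ← Finset.mul_sum] at h2
    calc ac + bc * (a * x + b * y) + ∑ i ∈ Finset.Ico 1 n, bi i * |a * x + b * y - c i|
        ≤ ac + bc * (a * x + b * y) +
          (a * ∑ i ∈ Finset.Ico 1 n, bi i * |x - c i| +
           b * ∑ i ∈ Finset.Ico 1 n, bi i * |y - c i|) := by linarith
      _ = a * (ac + bc * x + ∑ i ∈ Finset.Ico 1 n, bi i * |x - c i|) +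
          b * (ac + bc * y + ∑ i ∈ Finset.Ico 1 n, bi i * |y - c i|) := by
          linear_combination (-ac) * hab
  -- interpolation
  have hinterp : ∀ j ≤ n, ηhat (c j) = η (c j) := by
    intro j
    induction j with
    | zero =>
      intro _
      rw [hηhat, hac]
      have : ∑ i ∈ Finset.Ico 1 n, bi i * |c 0 - c i|
          = ∑ i ∈ Finset.Ico 1 n, bi i * (c i - c 0) := by
        refine Finset.sum_congr rfl ?_
        intro i hi
        simp only [Finset.mem_Ico] at hi
        have h := hmono 0 i (by omega) (by omega)
        rw [abs_of_nonpos (by linarith)]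
        ring
      rw [this]
      ring
    | succ j ih =>
      intro hjn
      have ihj := ih (by omega)
      -- split formula for u = c j and u = c (j+1)
      have hsplit : ∀ u : ℝ, (∀ i, 1 ≤ i → i ≤ j → c i ≤ u) → (∀ i, j + 1 ≤ i → i < n → u ≤ c i) →
          ac + bc * u + ∑ i ∈ Finset.Ico 1 n, bi i * |u - c i|
          = ac + bc * u + ((∑ i ∈ Finset.Ico 1 (j + 1), bi i * (u - c i))
            + ∑ i ∈ Finset.Ico (j + 1) n, bi i * (c i - u)) := by
        intro u hlo hhi
        rw [← Finset.sum_Ico_consecutive (fun i => bi i * |u - c i|)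
          (by omega : 1 ≤ j + 1) (by omega : j + 1 ≤ n)]
        congr 1
        congr 1
        · refine Finset.sum_congr rfl ?_
          intro i hi
          simp only [Finset.mem_Ico] at hi
          rw [abs_of_nonneg (by have := hlo i hi.1 (by omega); linarith)]
        · refine Finset.sum_congr rfl ?_
          intro i hi
          simp only [Finset.mem_Ico] at hi
          rw [abs_of_nonpos (by have := hhi i hi.1 hi.2; linarith)]
          ring
      have hsum1 : ∑ i ∈ Finset.Ico 1 (j + 1), bi i = (δ j - δ 0) / 2 := hT j
      have hsum2 : ∑ i ∈ Finset.Ico (j + 1) n, bi i = (δ (n - 1) - δ j) / 2 := by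
        have htot : ∑ i ∈ Finset.Ico 1 (j + 1), bi i + ∑ i ∈ Finset.Ico (j + 1) n, bi i
            = ∑ i ∈ Finset.Ico 1 n, bi i :=
          Finset.sum_Ico_consecutive _ (by omega) (by omega)
        have hn1 : ∑ i ∈ Finset.Ico 1 n, bi i = (δ (n - 1) - δ 0) / 2 := by
          have := hT (n - 1)
          rwa [(by omega : n - 1 + 1 = n)] at this
        rw [hsum1, hn1] at htot
        linarith
    -- linear-sum expansions
      have hS1a : ∑ i ∈ Finset.Ico 1 (j + 1), bi i * (c (j + 1) - c i)
          - ∑ i ∈ Finset.Ico 1 (j + 1), bi i * (c j - c i)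
          = (∑ i ∈ Finset.Ico 1 (j + 1), bi i) * (c (j + 1) - c j) := by
        rw [← Finset.sum_sub_distrib, Finset.sum_mul]
        refine Finset.sum_congr rfl fun i _ => by ring
      have hS2a : ∑ i ∈ Finset.Ico (j + 1) n, bi i * (c i - c j)
          - ∑ i ∈ Finset.Ico (j + 1) n, bi i * (c i - c (j + 1))
          = (∑ i ∈ Finset.Ico (j + 1) n, bi i) * (c (j + 1) - c j) := by
        rw [← Finset.sum_sub_distrib, Finset.sum_mul]
        refine Finset.sum_congr rfl fun i _ => by ring
      have hfj : ηhat (c j) = ac + bc * c j + ((∑ i ∈ Finset.Ico 1 (j + 1), bi i * (c j - c i))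
          + ∑ i ∈ Finset.Ico (j + 1) n, bi i * (c i - c j)) := by
        rw [hηhat]
        exact hsplit (c j) (fun i h1 h2 => hle i j h2 (by omega))
          (fun i h1 h2 => hle j i (by omega) (by omega))
      have hfj1 : ηhat (c (j + 1)) = ac + bc * c (j + 1)
          + ((∑ i ∈ Finset.Ico 1 (j + 1), bi i * (c (j + 1) - c i))
          + ∑ i ∈ Finset.Ico (j + 1) n, bi i * (c i - c (j + 1))) := by
        rw [hηhat]
        exact hsplit (c (j + 1)) (fun i h1 h2 => hle i (j + 1) (by omega) hjn)
          (fun i h1 h2 => hle (j + 1) i h1 (by omega))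
      have hΔ : c j < c (j + 1) := hc j (by omega)
      have hδj : δ j * (c (j + 1) - c j) = η (c (j + 1)) - η (c j) := by
        rw [hδ, div_mul_cancel₀ _ (sub_ne_zero.mpr hΔ.ne')]
      have : ηhat (c (j + 1)) - ηhat (c j) = δ j * (c (j + 1) - c j) := by
        rw [hfj, hfj1]
        have : bc + (∑ i ∈ Finset.Ico 1 (j + 1), bi i) - (∑ i ∈ Finset.Ico (j + 1) n, bi i)
            = δ j := by
          rw [hbc, hsum1, hsum2]; ring
        nlinarith [hS1a, hS2a, this]
      rw [ihj] at this
      linarith [hδj]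
  exact ⟨hbi0, hconv, hinterp⟩
end
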